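/- Let X ∈ ℝ^{nd×Kd} satisfy: (a) there is a clustering function C of [n] into K clusters of size m such that μ(X)_{iC(i)} − μ(X)_{ij} ≥ δ > 0 for all i ∈ [n] and all j ≠ C(i); and (b) for each i, the block X_{iC(i)} = η_i·R_i with η_i ≥ η > 0 and R_i ∈ O(d). Then for any X' ∈ ℝ^{nd×Kd}, any minimizer W of ‖·−X‖_F over F, and any minimizer W' of ‖·−X'‖_F over F, one has ‖W − W'‖_F ≤ 2·√(d²/δ² + 1/η²) · ‖X − X'‖_F. -/

import Mathlib

open Matrix BigOperators Finset

/-- Frobenius norm of a real matrix. -/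
noncomputable def frobNorm {a b : Type*} [Fintype a] [Fintype b]
    (X : Matrix a b ℝ) : ℝ :=
  Real.sqrt (∑ i, ∑ j, X i j ^ 2)

/-- `Q` belongs to the real orthogonal group `O(d)`. -/
def IsOrthoMat {d : ℕ} (Q : Matrix (Fin d) (Fin d) ℝ) : Prop :=
  Q * Qᵀ = 1 ∧ Qᵀ * Q = 1

/-- `Q` belongs to the special orthogonal group `SO(d)`. -/
def IsSpecOrthoMat {d : ℕ} (Q : Matrix (Fin d) (Fin d) ℝ) : Prop :=
  IsOrthoMat Q ∧ Q.det = 1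

/-- The `(i,j)`-th `d × d` block of a block matrix. -/
def blockOf {n K d : ℕ} (X : Matrix (Fin n × Fin d) (Fin K × Fin d) ℝ)
    (i : Fin n) (j : Fin K) : Matrix (Fin d) (Fin d) ℝ :=
  fun a b => X (i, a) (j, b)

/-- The singular values of a real `d × d` matrix: square roots of the
eigenvalues of the Gram matrix `Xᴴ X`. -/
noncomputable def singVals {d : ℕ} (X : Matrix (Fin d) (Fin d) ℝ) : Fin d → ℝ :=
  fun k => Real.sqrt (((by have h := Matrix.isHermitian_conjTranspose_mul_self X; rwa [Matrix.conjTranspose_eq_transpose_of_trivial] at h : (Xᵀ * X).IsHermitian)).eigenvalues k)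

/-- Nuclear norm: the sum of the singular values. -/
noncomputable def nuclearNorm {d : ℕ} (X : Matrix (Fin d) (Fin d) ℝ) : ℝ :=
  ∑ k, singVals X k

/-- The map `μ` sending `X` to its `n × K` matrix of blockwise nuclear norms. -/
noncomputable def muMap {n K d : ℕ} (X : Matrix (Fin n × Fin d) (Fin K × Fin d) ℝ) :
    Matrix (Fin n) (Fin K) ℝ :=
  fun i j => nuclearNorm (blockOf X i j)

/-- `H` is a clustering matrix: 0/1 entries, each row sums to 1, each column sums to `m`. -/
def IsClusteringMatrix {n K : ℕ} (m : ℕ) (H : Matrix (Fin n) (Fin K) ℝ) : Prop :=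
  (∀ i j, H i j = 0 ∨ H i j = 1) ∧ (∀ i, ∑ j, H i j = 1) ∧ (∀ j, ∑ i, H i j = (m : ℝ))

/-- `V = (1_{1×K} ⊗ R) ⊙ (H ⊗ 1_{d×d})`: the `(i,j)`-th `d × d` block is `H i j • R i`. -/
def buildV {n K d : ℕ} (R : Fin n → Matrix (Fin d) (Fin d) ℝ)
    (H : Matrix (Fin n) (Fin K) ℝ) : Matrix (Fin n × Fin d) (Fin K × Fin d) ℝ :=
  fun p q => H p.1 q.1 * R p.1 p.2 q.2

/-- Membership in the set `F` (resp. `E` if `G = SO(d)`): `V` is built from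
blocks `R i ∈ G` and a clustering matrix `H`. -/
def InFeas {n K d : ℕ} (m : ℕ) (G : Matrix (Fin d) (Fin d) ℝ → Prop)
    (V : Matrix (Fin n × Fin d) (Fin K × Fin d) ℝ) : Prop :=
  ∃ (R : Fin n → Matrix (Fin d) (Fin d) ℝ) (H : Matrix (Fin n) (Fin K) ℝ),
    (∀ i, G (R i)) ∧ IsClusteringMatrix m H ∧ V = buildV R H

/-- Membership in `F`: blocks in `O(d)`. -/
def InF {n K d : ℕ} (m : ℕ) (V : Matrix (Fin n × Fin d) (Fin K × Fin d) ℝ) : Prop :=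
  InFeas m IsOrthoMat V

/-- Membership in `P_K(G)`: `M = bdiag(U₁,…,U_K) (P ⊗ I_d)` with `U_k ∈ G`
and `P` a permutation matrix, i.e. the `(a,b)` block of `M` is `U a` if `a = π b`, else `0`. -/
def InPK {K d : ℕ} (G : Matrix (Fin d) (Fin d) ℝ → Prop)
    (M : Matrix (Fin K × Fin d) (Fin K × Fin d) ℝ) : Prop :=
  ∃ (U : Fin K → Matrix (Fin d) (Fin d) ℝ) (π : Equiv.Perm (Fin K)),
    (∀ k, G (U k)) ∧ ∀ p q, M p q = if p.1 = π q.1 then U p.1 p.2 q.2 else 0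

/-- `dist_G(V₁,V₂) = min_{Q ∈ P_K(G)} ‖V₁ - V₂ Q‖_F` (the minimum is attained
since `P_K(G)` is compact; we express it as an infimum). -/
noncomputable def distG {n K d : ℕ} (G : Matrix (Fin d) (Fin d) ℝ → Prop)
    (V₁ V₂ : Matrix (Fin n × Fin d) (Fin K × Fin d) ℝ) : ℝ :=
  sInf {r | ∃ Q, InPK G Q ∧ r = frobNorm (V₁ - V₂ * Q)}

/-- Estimation error `ε_G(V)` with respect to a ground truth `Vstar`. -/
noncomputable def epsG {n K d : ℕ} (G : Matrix (Fin d) (Fin d) ℝ → Prop)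
    (Vstar V : Matrix (Fin n × Fin d) (Fin K × Fin d) ℝ) : ℝ :=
  distG G V Vstar

/-!
Every element of `F` has squared Frobenius norm `n d`, so projecting onto `F` amounts to
maximizing `⟪V, X⟫`. Let `W₀` be the element of `F` with the blocks `Rᵢ` placed along `C`.
Using `⟪R, A⟫ ≤ ‖A‖_*` for orthogonal `R` and the separation of `μ(X)`, a row of `V ∈ F` placed
in a wrong cluster adds at most `2d` to `‖W₀ - V‖²` and loses at least `δ` in `⟪·, X⟫`, while a
row placed correctly, with rotation `R`, adds `2 (d - ⟪Rᵢ, R⟫)` and loses `ηᵢ (d - ⟪Rᵢ, R⟫)`.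
Hence `‖W₀ - V‖² ≤ M (⟪W₀, X⟫ - ⟪V, X⟫)` with `M = 2 √(d²/δ² + 1/η²)`. For `X' = X` this
forces `W = W₀`; in general, optimality of `W'` for `X'` bounds the right-hand side by
`M ‖W₀ - W'‖ ‖X - X'‖`.
-/

open scoped RealInnerProductSpace

theorem norm_sub_le_of_norm_sub_sq_le_inner_sub {E : Type*} [NormedAddCommGroup E]
    [InnerProductSpace ℝ E] {w₀ w x x' : E} {M : ℝ} (hM : 0 ≤ M) (hnorm : ‖w‖ = ‖w₀‖)
    (hgap : ‖w₀ - w‖ ^ 2 ≤ M * (⟪w₀, x⟫ - ⟪w, x⟫)) (hmin : ‖w - x'‖ ≤ ‖w₀ - x'‖) :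
    ‖w₀ - w‖ ≤ M * ‖x - x'‖ := by
  have hx' : ⟪w₀, x'⟫ ≤ ⟪w, x'⟫ := by
    have := pow_le_pow_left₀ (norm_nonneg _) hmin 2
    rw [norm_sub_sq_real, norm_sub_sq_real, hnorm] at this
    linarith
  have hcs : ⟪w₀, x⟫ - ⟪w, x⟫ ≤ ‖w₀ - w‖ * ‖x - x'‖ := by
    have := real_inner_le_norm (w₀ - w) (x - x')
    simp only [inner_sub_left, inner_sub_right] at this
    linarith
  have hsq : ‖w₀ - w‖ * ‖w₀ - w‖ ≤ (M * ‖x - x'‖) * ‖w₀ - w‖ := by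
    nlinarith [mul_le_mul_of_nonneg_left hcs hM]
  rcases (norm_nonneg (w₀ - w)).eq_or_lt with h | h
  · rw [← h]; positivity
  · exact le_of_mul_le_mul_right hsq h

theorem le_sqrt_sq_div_sq_add_mul {x y c : ℝ} (hy : 0 ≤ y) (hc : 0 < c) :
    x ≤ √(x ^ 2 / c ^ 2 + y) * c := by
  rw [← div_le_iff₀ hc]
  apply Real.le_sqrt_of_sq_le
  rw [div_pow]
  linarith

section Frobenius

variable {a b : Type*}

def frobVec (X : Matrix a b ℝ) : EuclideanSpace ℝ (a × b) :=
  WithLp.toLp 2 fun p => X p.1 p.2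

theorem frobVec_sub (X Y : Matrix a b ℝ) : frobVec (X - Y) = frobVec X - frobVec Y := rfl

theorem frobVec_smul (c : ℝ) (X : Matrix a b ℝ) : frobVec (c • X) = c • frobVec X := rfl

theorem frobVec_zero : frobVec (0 : Matrix a b ℝ) = 0 := rfl

variable [Fintype a] [Fintype b]

theorem inner_frobVec (X Y : Matrix a b ℝ) :
    ⟪frobVec X, frobVec Y⟫ = ∑ i, ∑ j, X i j * Y i j := by
  simp [frobVec, PiLp.inner_apply, Fintype.sum_prod_type, mul_comm]

theorem frobNorm_eq_norm_frobVec (X : Matrix a b ℝ) : frobNorm X = ‖frobVec X‖ := by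
  simp [frobNorm, frobVec, EuclideanSpace.norm_eq, Fintype.sum_prod_type]

end Frobenius

section Orthonormal

variable {m n : Type*} [Fintype m] [Fintype n]

theorem dotProduct_mulVec_self (M : Matrix m n ℝ) (v : n → ℝ) :
    (M *ᵥ v) ⬝ᵥ (M *ᵥ v) = v ⬝ᵥ ((Mᵀ * M) *ᵥ v) := by
  rw [← mulVec_mulVec, mulVec_transpose, dotProduct_comm v, ← dotProduct_mulVec]

theorem dotProduct_le_sqrt_mul_sqrt (u w : n → ℝ) : u ⬝ᵥ w ≤ √(u ⬝ᵥ u) * √(w ⬝ᵥ w) := by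
  simpa only [dotProduct, sq] using Real.sum_mul_le_sqrt_mul_sqrt univ u w

theorem OrthonormalBasis.dotProduct_self (b : OrthonormalBasis n ℝ (EuclideanSpace ℝ n))
    (k : n) : ⇑(b k) ⬝ᵥ ⇑(b k) = 1 := by
  have := real_inner_self_eq_norm_sq (b k)
  rw [b.orthonormal.1 k, EuclideanSpace.inner_eq_star_dotProduct] at this
  simpa using this

theorem OrthonormalBasis.sum_dotProduct_mulVec (b : OrthonormalBasis n ℝ (EuclideanSpace ℝ n))
    (Q A : Matrix m n ℝ) :
    ∑ k, (Q *ᵥ ⇑(b k)) ⬝ᵥ (A *ᵥ ⇑(b k)) = ⟪frobVec Q, frobVec A⟫ := by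
  have hrow : ∀ i, ∑ j, Q i j * A i j = ∑ k, (Q *ᵥ ⇑(b k)) i * (A *ᵥ ⇑(b k)) i := fun i => by
    have := b.sum_inner_mul_inner (WithLp.toLp 2 (Q i)) (WithLp.toLp 2 (A i))
    simp only [EuclideanSpace.inner_eq_star_dotProduct, star_trivial] at this
    calc ∑ j, Q i j * A i j = A i ⬝ᵥ Q i := by simp only [dotProduct, mul_comm]
      _ = _ := this.symm
      _ = _ := by simp only [mulVec, dotProduct_comm (b _).ofLp]
  rw [inner_frobVec, sum_congr rfl fun i _ => hrow i, sum_comm]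
  rfl

end Orthonormal

namespace IsOrthoMat

variable {d : ℕ} {S R : Matrix (Fin d) (Fin d) ℝ}

theorem dotProduct_mulVec_self (hS : IsOrthoMat S) (v : Fin d → ℝ) :
    (S *ᵥ v) ⬝ᵥ (S *ᵥ v) = v ⬝ᵥ v := by
  rw [_root_.dotProduct_mulVec_self, hS.2, one_mulVec]

theorem norm_frobVec_sq (hS : IsOrthoMat S) : ‖frobVec S‖ ^ 2 = d := by
  have hrow : ∀ i, ∑ j, S i j * S i j = 1 := fun i => by
    simpa [mul_apply] using congrFun (congrFun hS.1 i) i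
  rw [← real_inner_self_eq_norm_sq, inner_frobVec]
  simp [hrow]

theorem inner_frobVec_smul_self (hS : IsOrthoMat S) (c : ℝ) :
    ⟪frobVec S, frobVec (c • S)⟫ = c * d := by
  rw [frobVec_smul, inner_smul_right, real_inner_self_eq_norm_sq, hS.norm_frobVec_sq]

theorem inner_frobVec_le (hS : IsOrthoMat S) (hR : IsOrthoMat R) : ⟪frobVec S, frobVec R⟫ ≤ d := by
  have hnorm : ‖frobVec S‖ = ‖frobVec R‖ := by
    rw [← sq_eq_sq₀ (norm_nonneg _) (norm_nonneg _), hS.norm_frobVec_sq, hR.norm_frobVec_sq]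
  calc ⟪frobVec S, frobVec R⟫ ≤ ‖frobVec S‖ * ‖frobVec R‖ := real_inner_le_norm _ _
    _ = d := by rw [hnorm, ← sq, hR.norm_frobVec_sq]

end IsOrthoMat

section NuclearNorm

variable {d : ℕ}

theorem nuclearNorm_eq_sum_sqrt_eigenvalues (X : Matrix (Fin d) (Fin d) ℝ)
    (hX : (Xᵀ * X).IsHermitian) : nuclearNorm X = ∑ k, √(hX.eigenvalues k) := rfl

theorem eigenvalues_transpose_mul_self {X : Matrix (Fin d) (Fin d) ℝ}
    (hX : (Xᵀ * X).IsHermitian) (k : Fin d) :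
    hX.eigenvalues k = (X *ᵥ ⇑(hX.eigenvectorBasis k)) ⬝ᵥ (X *ᵥ ⇑(hX.eigenvectorBasis k)) := by
  rw [dotProduct_mulVec_self, hX.mulVec_eigenvectorBasis, dotProduct_smul,
    hX.eigenvectorBasis.dotProduct_self, smul_eq_mul, mul_one]

theorem IsOrthoMat.inner_frobVec_le_nuclearNorm {S : Matrix (Fin d) (Fin d) ℝ}
    (hS : IsOrthoMat S) (A : Matrix (Fin d) (Fin d) ℝ) :
    ⟪frobVec S, frobVec A⟫ ≤ nuclearNorm A := by
  -- Expand `⟪S, A⟫` in an eigenbasis `vₖ` of `Aᵀ A`; then `⟪S vₖ, A vₖ⟫ ≤ ‖S vₖ‖ ‖A vₖ‖ = σₖ`.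
  have hA : (Aᵀ * A).IsHermitian := by simpa using isHermitian_conjTranspose_mul_self A
  rw [nuclearNorm_eq_sum_sqrt_eigenvalues A hA, ← hA.eigenvectorBasis.sum_dotProduct_mulVec]
  refine sum_le_sum fun k _ => (dotProduct_le_sqrt_mul_sqrt _ _).trans_eq ?_
  rw [hS.dotProduct_mulVec_self, hA.eigenvectorBasis.dotProduct_self, Real.sqrt_one, one_mul,
    eigenvalues_transpose_mul_self]

theorem IsOrthoMat.nuclearNorm_smul {S : Matrix (Fin d) (Fin d) ℝ} (hS : IsOrthoMat S) {c : ℝ}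
    (hc : 0 ≤ c) : nuclearNorm (c • S) = c * d := by
  have hcS : ((c • S)ᵀ * (c • S)).IsHermitian := by
    simpa using isHermitian_conjTranspose_mul_self (c • S)
  have hev : ∀ k, hcS.eigenvalues k = c ^ 2 := fun k => by
    rw [eigenvalues_transpose_mul_self, smul_mulVec, dotProduct_smul, smul_dotProduct,
      hS.dotProduct_mulVec_self, hcS.eigenvectorBasis.dotProduct_self]
    simp [sq]
  simp only [nuclearNorm_eq_sum_sqrt_eigenvalues _ hcS, hev, Real.sqrt_sq hc, sum_const,
    card_univ, Fintype.card_fin, nsmul_eq_mul, mul_comm]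

end NuclearNorm

namespace IsOrthoMat

variable {d : ℕ} {S R : Matrix (Fin d) (Fin d) ℝ}

theorem two_mul_sub_inner_le (hS : IsOrthoMat S) (hR : IsOrthoMat R) {c M : ℝ}
    (hMc : 2 ≤ M * c) :
    2 * d - 2 * ⟪frobVec S, frobVec R⟫
      ≤ M * (⟪frobVec S, frobVec (c • S)⟫ - ⟪frobVec R, frobVec (c • S)⟫) := by
  have hSR := hS.inner_frobVec_le hR
  rw [hS.inner_frobVec_smul_self, frobVec_smul, inner_smul_right, real_inner_comm (frobVec S)]
  nlinarith [mul_nonneg (sub_nonneg.2 hMc) (sub_nonneg.2 hSR)]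

theorem le_inner_sub_inner_of_le_nuclearNorm_sub (hS : IsOrthoMat S) (hR : IsOrthoMat R)
    {c δ : ℝ} (hc : 0 ≤ c) {A : Matrix (Fin d) (Fin d) ℝ}
    (hsep : δ ≤ nuclearNorm (c • S) - nuclearNorm A) :
    δ ≤ ⟪frobVec S, frobVec (c • S)⟫ - ⟪frobVec R, frobVec A⟫ := by
  have := hR.inner_frobVec_le_nuclearNorm A
  rw [hS.nuclearNorm_smul hc] at hsep
  rw [hS.inner_frobVec_smul_self]
  linarith

end IsOrthoMat

section Blocks

variable {n K d m : ℕ}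

theorem inner_frobVec_eq_sum_blocks (Y Z : Matrix (Fin n × Fin d) (Fin K × Fin d) ℝ) :
    ⟪frobVec Y, frobVec Z⟫ = ∑ i, ∑ j, ⟪frobVec (blockOf Y i j), frobVec (blockOf Z i j)⟫ := by
  simp only [inner_frobVec, Fintype.sum_prod_type, blockOf]
  exact sum_congr rfl fun i _ => sum_comm

def clusterMatrix (C : Fin n → Fin K) : Matrix (Fin n) (Fin K) ℝ :=
  fun i j => if j = C i then 1 else 0

theorem isClusteringMatrix_clusterMatrix {C : Fin n → Fin K}
    (hsize : ∀ j, (univ.filter fun i => C i = j).card = m) :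
    IsClusteringMatrix m (clusterMatrix C) := by
  refine ⟨fun i j => ?_, fun i => by simp [clusterMatrix], fun j => ?_⟩
  · unfold clusterMatrix; split_ifs <;> simp
  · simp [clusterMatrix, sum_boole, ← hsize j, @eq_comm _ j]

theorem IsClusteringMatrix.exists_eq_clusterMatrix {H : Matrix (Fin n) (Fin K) ℝ}
    (hH : IsClusteringMatrix m H) : ∃ C, H = clusterMatrix C := by
  obtain ⟨h01, hrow, -⟩ := hH
  have hone : ∀ i, ∃ j, H i j = 1 := fun i => by
    by_contra! h
    have : ∑ j, H i j = 0 := sum_eq_zero fun j _ => (h01 i j).resolve_right (h j)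
    rw [hrow i] at this
    exact one_ne_zero this
  choose C hC using hone
  refine ⟨C, funext fun i => funext fun j => ?_⟩
  rcases eq_or_ne j (C i) with rfl | hj
  · simp [clusterMatrix, hC]
  · have hrest : ∑ k ∈ univ.erase (C i), H i k = 0 := by
      have := add_sum_erase univ (H i) (mem_univ (C i))
      rw [hrow i, hC i] at this
      linarith
    have hnonneg : ∀ k ∈ univ.erase (C i), 0 ≤ H i k := fun k _ => by
      rcases h01 i k with h | h <;> simp [h]
    simp [clusterMatrix, hj, (sum_eq_zero_iff_of_nonneg hnonneg).1 hrest j (by simp [hj])]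

theorem InF.exists_eq_buildV {V : Matrix (Fin n × Fin d) (Fin K × Fin d) ℝ} (hV : InF m V) :
    ∃ R C, (∀ i, IsOrthoMat (R i)) ∧ V = buildV R (clusterMatrix C) := by
  obtain ⟨R, H, hR, hH, rfl⟩ := hV
  obtain ⟨C, rfl⟩ := hH.exists_eq_clusterMatrix
  exact ⟨R, C, hR, rfl⟩

theorem blockOf_buildV_clusterMatrix (R : Fin n → Matrix (Fin d) (Fin d) ℝ) (C : Fin n → Fin K)
    (i : Fin n) (j : Fin K) :
    blockOf (buildV R (clusterMatrix C)) i j = if j = C i then R i else 0 := by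
  ext a b
  by_cases h : j = C i <;> simp [blockOf, buildV, clusterMatrix, h]

theorem inner_buildV_clusterMatrix (R : Fin n → Matrix (Fin d) (Fin d) ℝ) (C : Fin n → Fin K)
    (Y : Matrix (Fin n × Fin d) (Fin K × Fin d) ℝ) :
    ⟪frobVec (buildV R (clusterMatrix C)), frobVec Y⟫
      = ∑ i, ⟪frobVec (R i), frobVec (blockOf Y i (C i))⟫ := by
  rw [inner_frobVec_eq_sum_blocks]
  refine sum_congr rfl fun i _ => (sum_eq_single (C i) (fun j _ hj => ?_) (by simp)).trans ?_
  · simp [blockOf_buildV_clusterMatrix, hj, frobVec_zero]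
  · simp [blockOf_buildV_clusterMatrix]

theorem norm_frobVec_buildV_sq {R : Fin n → Matrix (Fin d) (Fin d) ℝ}
    (hR : ∀ i, IsOrthoMat (R i)) (C : Fin n → Fin K) :
    ‖frobVec (buildV R (clusterMatrix C))‖ ^ 2 = n * d := by
  rw [← real_inner_self_eq_norm_sq, inner_buildV_clusterMatrix]
  simp [blockOf_buildV_clusterMatrix, (hR _).norm_frobVec_sq]

theorem InF.norm_frobVec_sq {V : Matrix (Fin n × Fin d) (Fin K × Fin d) ℝ} (hV : InF m V) :
    ‖frobVec V‖ ^ 2 = n * d := by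
  obtain ⟨R, C, hR, rfl⟩ := hV.exists_eq_buildV
  exact norm_frobVec_buildV_sq hR C

theorem norm_frobVec_sub_sq_le {X : Matrix (Fin n × Fin d) (Fin K × Fin d) ℝ}
    {C : Fin n → Fin K} {δ : ℝ} {ηi : Fin n → ℝ} {Ri : Fin n → Matrix (Fin d) (Fin d) ℝ}
    (hsep : ∀ i j, j ≠ C i → δ ≤ muMap X i (C i) - muMap X i j)
    (hηi : ∀ i, 0 ≤ ηi i) (hRi : ∀ i, IsOrthoMat (Ri i))
    (hblk : ∀ i, blockOf X i (C i) = ηi i • Ri i) {M : ℝ} (hM : 0 ≤ M)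
    (hMδ : 2 * d ≤ M * δ) (hMη : ∀ i, 2 ≤ M * ηi i)
    {V : Matrix (Fin n × Fin d) (Fin K × Fin d) ℝ} (hV : InF m V) :
    ‖frobVec (buildV Ri (clusterMatrix C)) - frobVec V‖ ^ 2
      ≤ M * (⟪frobVec (buildV Ri (clusterMatrix C)), frobVec X⟫ - ⟪frobVec V, frobVec X⟫) := by
  obtain ⟨R, C', hR, rfl⟩ := hV.exists_eq_buildV
  have hrow : ∀ i,
      2 * d - 2 * ⟪frobVec (Ri i), frobVec (blockOf (buildV R (clusterMatrix C')) i (C i))⟫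
        ≤ M * (⟪frobVec (Ri i), frobVec (blockOf X i (C i))⟫
          - ⟪frobVec (R i), frobVec (blockOf X i (C' i))⟫) := fun i => by
    rw [blockOf_buildV_clusterMatrix, hblk]
    rcases eq_or_ne (C i) (C' i) with h | h
    · rw [if_pos h, ← h, hblk]
      exact (hRi i).two_mul_sub_inner_le (hR i) (hMη i)
    · have hsep_i := hsep i (C' i) (Ne.symm h)
      simp only [muMap, hblk] at hsep_i
      have := (hRi i).le_inner_sub_inner_of_le_nuclearNorm_sub (hR i) (hηi i) hsep_i
      rw [if_neg h, frobVec_zero, inner_zero_right]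
      nlinarith
  rw [norm_sub_sq_real, norm_frobVec_buildV_sq hRi, norm_frobVec_buildV_sq hR,
    inner_buildV_clusterMatrix, inner_buildV_clusterMatrix, inner_buildV_clusterMatrix,
    ← sum_sub_distrib]
  calc _ = ∑ i, (2 * d - 2 * ⟪frobVec (Ri i),
        frobVec (blockOf (buildV R (clusterMatrix C')) i (C i))⟫) := by
        simp only [sum_sub_distrib, ← mul_sum, sum_const, card_univ, Fintype.card_fin,
          nsmul_eq_mul]
        ring
    _ ≤ _ := sum_le_sum fun i _ => hrow i
    _ = _ := (mul_sum _ _ _).symm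

end Blocks

/-- Lipschitz-like property of the projection onto `F`.
If `μ(X)` is `δ`-separated along a clustering `C` with clusters of size `m`,
and each block `X_{i C(i)} = ηᵢ • Rᵢ` with `ηᵢ ≥ η > 0` and `Rᵢ ∈ O(d)`, then
for any `X'`, any minimizer `W` of `‖· - X‖_F` over `F` and any minimizer `W'`
of `‖· - X'‖_F` over `F` satisfy
`‖W - W'‖_F ≤ 2 √(d²/δ² + 1/η²) ‖X - X'‖_F`. -/
theorem stmt10 {n K d m : ℕ}
    (X X' : Matrix (Fin n × Fin d) (Fin K × Fin d) ℝ)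
    (C : Fin n → Fin K)
    (hsize : ∀ j, (Finset.univ.filter fun i => C i = j).card = m)
    (δ η : ℝ) (hδ : 0 < δ) (hη : 0 < η)
    (hsep : ∀ i j, j ≠ C i → δ ≤ muMap X i (C i) - muMap X i j)
    (ηi : Fin n → ℝ) (Ri : Fin n → Matrix (Fin d) (Fin d) ℝ)
    (hηi : ∀ i, η ≤ ηi i) (hRi : ∀ i, IsOrthoMat (Ri i))
    (hblk : ∀ i, blockOf X i (C i) = ηi i • Ri i)
    (W W' : Matrix (Fin n × Fin d) (Fin K × Fin d) ℝ)
    (hW : InF m W) (hWmin : ∀ W'', InF m W'' → frobNorm (W - X) ≤ frobNorm (W'' - X))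
    (hW' : InF m W')
    (hW'min : ∀ W'', InF m W'' → frobNorm (W' - X') ≤ frobNorm (W'' - X')) :
    frobNorm (W - W') ≤
      2 * Real.sqrt ((d : ℝ)^2 / δ^2 + 1 / η^2) * frobNorm (X - X') := by
  set M := 2 * Real.sqrt ((d : ℝ)^2 / δ^2 + 1 / η^2)
  have hMδ : 2 * d ≤ M * δ := by
    have := le_sqrt_sq_div_sq_add_mul (x := (d : ℝ)) (by positivity : 0 ≤ 1 / η ^ 2) hδ
    linarith
  have hMη : 2 ≤ M * η := by
    have := le_sqrt_sq_div_sq_add_mul (x := 1) (by positivity : 0 ≤ (d : ℝ) ^ 2 / δ ^ 2) hη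
    rw [one_pow, add_comm] at this
    linarith
  set W₀ := buildV Ri (clusterMatrix C)
  have hW₀ : InF m W₀ := ⟨Ri, _, hRi, isClusteringMatrix_clusterMatrix hsize, rfl⟩
  have hdist : ∀ {V Y}, InF m V → (∀ W'', InF m W'' → frobNorm (V - Y) ≤ frobNorm (W'' - Y)) →
      ‖frobVec W₀ - frobVec V‖ ≤ M * ‖frobVec X - frobVec Y‖ := fun hV hmin =>
    norm_sub_le_of_norm_sub_sq_le_inner_sub (by positivity)
      ((sq_eq_sq₀ (norm_nonneg _) (norm_nonneg _)).1
        (hV.norm_frobVec_sq.trans hW₀.norm_frobVec_sq.symm))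
      (norm_frobVec_sub_sq_le hsep (fun i => hη.le.trans (hηi i)) hRi hblk (by positivity) hMδ
        (fun i => hMη.trans (by gcongr; exact hηi i)) hV)
      (by simpa only [frobNorm_eq_norm_frobVec, frobVec_sub] using hmin _ hW₀)
  have hW : frobVec W = frobVec W₀ := by
    simpa [sub_eq_zero, eq_comm] using hdist hW hWmin
  simpa only [frobNorm_eq_norm_frobVec, frobVec_sub, hW] using hdist hW' hW'min
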